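/- arXiv:1301.2567 — 5 statements merged into one kernel-verified Lean document; each statement's English description precedes it below -/
import Mathlib

section
/- Let A ∈ ℂ^{n×p}, B ∈ ℂ^{m×q}, C ∈ ℂ^{n×q}, Hermitian D ∈ ℂ^{n×n} and Hermitian M ∈ ℂ^{q×q} be given with A ≠ 0 and BMB* ≠ 0, and let φ(X) = (AXB + C)M(AXB + C)* + D for X ∈ ℂ^{p×m}. Then φ(X) ≻ 0 (positive definite) for all X ∈ ℂ^{p×m} if and only if D + CMC* ≻ 0, N3 ⪰ 0, and ℛ([A; 0]) ⊆ ℛ(N3), where [A; 0] is the (n+m)×p matrix obtained by stacking A on top of the m×p zero matrix. -/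
/-!
Write `U X = [I, A X]`, so that `φ(X) = U X * N3 * (U X)ᴴ` and `v* φ(X) v = w* N3 w` with
`w = (v, X* A* v)`. Since `X* A* v` can be any vector once `A* v ≠ 0`, positivity of every
`φ(X)` makes the form of `N3` positive on the set of `w` whose first block is not killed by `A*`;
this set is dense because `A ≠ 0`, so `N3 ⪰ 0`. It also forces `A* v = 0` for every `(v, u)` in
`ker N3 = ℛ(N3)^⊥`, which is the range condition. Conversely, if `w* N3 w = 0` then `N3 w = 0`,
the range condition gives `A* v = 0`, so `w = (v, 0)` and `v* (D + C M C*) v = 0`, i.e. `v = 0`.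
-/

open Matrix
open scoped ComplexOrder

theorem LinearMap.dense_setOf_apply_ne_zero {𝕜 E F : Type*} [NontriviallyNormedField 𝕜]
    [AddCommGroup E] [Module 𝕜 E] [TopologicalSpace E] [ContinuousAdd E] [ContinuousSMul 𝕜 E]
    [AddCommGroup F] [Module 𝕜 F] {L : E →ₗ[𝕜] F} (hL : L ≠ 0) : Dense {x | L x ≠ 0} := by
  refine interior_eq_empty_iff_dense_compl.mp (Set.not_nonempty_iff_eq_empty.mp fun h => hL ?_)
  exact LinearMap.ker_eq_top.mp (Submodule.eq_top_of_nonempty_interior' _ h)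

namespace Matrix

variable {ι κ π : Type*}

theorem exists_mulVec_eq {K : Type*} [Field K] [Fintype π] {a : π → K} (ha : a ≠ 0)
    (u : κ → K) : ∃ Y : Matrix κ π K, Y *ᵥ a = u := by
  classical
  obtain ⟨j, hj⟩ := Function.ne_iff.mp ha
  refine ⟨vecMulVec u (Pi.single j (a j)⁻¹), ?_⟩
  rw [vecMulVec_mulVec, single_dotProduct, inv_mul_cancel₀ hj]
  simp

theorem dotProduct_mul_mul_conjTranspose_mulVec {R : Type*} [CommSemiring R] [StarRing R]
    [Fintype ι] [Fintype κ] (U : Matrix ι κ R) (N : Matrix κ κ R) (v : ι → R) :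
    star v ⬝ᵥ (U * N * Uᴴ) *ᵥ v = star (Uᴴ *ᵥ v) ⬝ᵥ N *ᵥ (Uᴴ *ᵥ v) := by
  rw [star_mulVec, conjTranspose_conjTranspose, ← mulVec_mulVec, ← mulVec_mulVec,
    dotProduct_mulVec (star v) U]

theorem conjTranspose_fromCols_one_mulVec {R : Type*} [Semiring R] [StarRing R] [Fintype ι]
    [DecidableEq ι] (W : Matrix ι κ R) (v : ι → R) :
    (fromCols 1 W)ᴴ *ᵥ v = Sum.elim v (Wᴴ *ᵥ v) := by
  rw [conjTranspose_fromCols_eq_fromRows_conjTranspose, conjTranspose_one, fromRows_mulVec,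
    one_mulVec]

theorem conjTranspose_fromRows_zero_mulVec {R : Type*} [Semiring R] [StarRing R] [Fintype ι]
    [Fintype κ] (A : Matrix ι π R) (w : ι ⊕ κ → R) :
    (fromRows A (0 : Matrix κ π R))ᴴ *ᵥ w = Aᴴ *ᵥ (w ∘ Sum.inl) := by
  rw [conjTranspose_fromRows_eq_fromCols_conjTranspose, ← Sum.elim_comp_inl_inr w,
    fromCols_mulVec_sumElim]
  simp

theorem fromCols_one_zero_mul_mul_conjTranspose {R : Type*} [Semiring R] [StarRing R]
    [Fintype ι] [Fintype κ] [DecidableEq ι] (N : Matrix (ι ⊕ κ) (ι ⊕ κ) R) :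
    fromCols (1 : Matrix ι ι R) (0 : Matrix ι κ R) * N *
        (fromCols (1 : Matrix ι ι R) (0 : Matrix ι κ R))ᴴ = N.toBlocks₁₁ := by
  nth_rw 1 [← fromBlocks_toBlocks N]
  rw [conjTranspose_fromCols_eq_fromRows_conjTranspose, fromCols_mul_fromBlocks,
    fromCols_mul_fromRows]
  simp

theorem dotProduct_toBlocks₁₁_mulVec {R : Type*} [CommSemiring R] [StarRing R] [Fintype ι]
    [Fintype κ] [DecidableEq ι] (N : Matrix (ι ⊕ κ) (ι ⊕ κ) R) (v : ι → R) :
    star v ⬝ᵥ N.toBlocks₁₁ *ᵥ v = star (Sum.elim v 0) ⬝ᵥ N *ᵥ Sum.elim v (0 : κ → R) := by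
  rw [← fromCols_one_zero_mul_mul_conjTranspose, dotProduct_mul_mul_conjTranspose_mulVec,
    conjTranspose_fromCols_one_mulVec, conjTranspose_zero, zero_mulVec]

theorem mul_mul_conjTranspose_add_eq_fromCols_mul_fromBlocks {R : Type*} [CommRing R]
    [StarRing R] {n m q : Type*} [Fintype n] [DecidableEq n] [Fintype m] [Fintype q]
    (W : Matrix n m R) (B : Matrix m q R) (C : Matrix n q R) (D : Matrix n n R)
    (M : Matrix q q R) :
    (W * B + C) * M * (W * B + C)ᴴ + D =
      fromCols (1 : Matrix n n R) W *
          fromBlocks (D + C * M * Cᴴ) (C * M * Bᴴ) (B * M * Cᴴ) (B * M * Bᴴ) *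
        (fromCols (1 : Matrix n n R) W)ᴴ := by
  rw [conjTranspose_fromCols_eq_fromRows_conjTranspose, conjTranspose_one,
    fromCols_mul_fromBlocks, fromCols_mul_fromRows, conjTranspose_add, conjTranspose_mul]
  simp only [Matrix.add_mul, Matrix.mul_add, Matrix.mul_assoc, Matrix.one_mul, Matrix.mul_one]
  abel

theorem posSemidef_of_forall_dotProduct_mulVec_nonneg [Fintype ι] [DecidableEq ι]
    {N : Matrix ι ι ℂ} (h : ∀ x, 0 ≤ star x ⬝ᵥ N *ᵥ x) : N.PosSemidef := by
  rw [← isPositive_toEuclideanLin_iff, LinearMap.isPositive_iff_complex]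
  intro x
  have hx := h x.ofLp
  have hinner : x.ofLp ⬝ᵥ star (N *ᵥ x.ofLp) = star (star x.ofLp ⬝ᵥ N *ᵥ x.ofLp) := by
    rw [star_dotProduct, star_star, dotProduct_comm]
  rw [EuclideanSpace.inner_eq_star_dotProduct, toLpLin_apply, WithLp.ofLp_toLp, hinner,
    (IsSelfAdjoint.of_nonneg hx).star_eq]
  obtain ⟨hre, him⟩ := Complex.nonneg_iff.mp hx
  exact ⟨Complex.ext rfl (by simpa using him), hre⟩

theorem range_mulVecLin_eq_map_range_toEuclideanLin [Fintype κ] [DecidableEq κ]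
    (K : Matrix ι κ ℂ) :
    LinearMap.range K.mulVecLin =
      (LinearMap.range (toEuclideanLin K)).map
        (WithLp.linearEquiv 2 ℂ (ι → ℂ)).toLinearMap := by
  ext v
  constructor
  · rintro ⟨y, rfl⟩
    exact ⟨_, ⟨WithLp.toLp 2 y, rfl⟩, rfl⟩
  · rintro ⟨_, ⟨y, rfl⟩, rfl⟩
    exact ⟨y.ofLp, rfl⟩

theorem ker_mulVecLin_eq_map_ker_toEuclideanLin [Fintype κ] [DecidableEq κ]
    (K : Matrix ι κ ℂ) :
    LinearMap.ker K.mulVecLin =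
      (LinearMap.ker (toEuclideanLin K)).map
        (WithLp.linearEquiv 2 ℂ (κ → ℂ)).toLinearMap := by
  ext v
  simp

theorem range_toEuclideanLin_eq_orthogonal_ker [Fintype ι] [DecidableEq ι] [Fintype κ]
    [DecidableEq κ] (K : Matrix ι κ ℂ) :
    LinearMap.range (toEuclideanLin K) = (LinearMap.ker (toEuclideanLin Kᴴ))ᗮ := by
  rw [LinearMap.orthogonal_ker, ← toEuclideanLin_conjTranspose_eq_adjoint,
    conjTranspose_conjTranspose]

theorem range_mulVecLin_le_range_iff [Fintype ι] [Fintype κ] [Fintype π] {K : Matrix ι κ ℂ}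
    {N : Matrix ι π ℂ} :
    LinearMap.range K.mulVecLin ≤ LinearMap.range N.mulVecLin ↔
      LinearMap.ker Nᴴ.mulVecLin ≤ LinearMap.ker Kᴴ.mulVecLin := by
  classical
  simp only [range_mulVecLin_eq_map_range_toEuclideanLin,
    ker_mulVecLin_eq_map_ker_toEuclideanLin,
    Submodule.map_le_map_iff_of_injective (LinearEquiv.injective _),
    range_toEuclideanLin_eq_orthogonal_ker, Submodule.orthogonal_le_orthogonal_iff]

section Congruence

variable [Fintype ι] [DecidableEq ι] [Fintype κ] [Fintype π]
  {N : Matrix (ι ⊕ κ) (ι ⊕ κ) ℂ} {A : Matrix ι π ℂ}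

theorem dotProduct_fromCols_one_mul_mul_conjTranspose_mulVec (X : Matrix π κ ℂ) (v : ι → ℂ) :
    star v ⬝ᵥ
        (fromCols (1 : Matrix ι ι ℂ) (A * X) * N * (fromCols (1 : Matrix ι ι ℂ) (A * X))ᴴ) *ᵥ v =
      star (Sum.elim v (Xᴴ *ᵥ (Aᴴ *ᵥ v))) ⬝ᵥ N *ᵥ Sum.elim v (Xᴴ *ᵥ (Aᴴ *ᵥ v)) := by
  rw [dotProduct_mul_mul_conjTranspose_mulVec, conjTranspose_fromCols_one_mulVec,
    conjTranspose_mul, mulVec_mulVec]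

theorem dotProduct_mulVec_pos_of_forall_posDef
    (h : ∀ X : Matrix π κ ℂ,
      (fromCols (1 : Matrix ι ι ℂ) (A * X) * N * (fromCols (1 : Matrix ι ι ℂ) (A * X))ᴴ).PosDef)
    {w : ι ⊕ κ → ℂ} (hw : Aᴴ *ᵥ (w ∘ Sum.inl) ≠ 0) : 0 < star w ⬝ᵥ N *ᵥ w := by
  obtain ⟨Y, hY⟩ := exists_mulVec_eq hw (w ∘ Sum.inr)
  have hv : w ∘ Sum.inl ≠ 0 := fun hv => hw (by rw [hv, mulVec_zero])
  have := (h Yᴴ).dotProduct_mulVec_pos hv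
  rwa [dotProduct_fromCols_one_mul_mul_conjTranspose_mulVec, conjTranspose_conjTranspose, hY,
    Sum.elim_comp_inl_inr] at this

theorem posSemidef_of_forall_posDef (hA : A ≠ 0)
    (h : ∀ X : Matrix π κ ℂ,
      (fromCols (1 : Matrix ι ι ℂ) (A * X) * N * (fromCols (1 : Matrix ι ι ℂ) (A * X))ᴴ).PosDef) :
    N.PosSemidef := by
  classical
  let L : (ι ⊕ κ → ℂ) →ₗ[ℂ] π → ℂ := Aᴴ.mulVecLin ∘ₗ LinearMap.funLeft ℂ ℂ Sum.inl
  have hL : L ≠ 0 := by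
    refine fun hL => hA (conjTranspose_eq_zero.mp (ext_iff_mulVec.mpr fun v => ?_))
    simpa [L, LinearMap.funLeft] using LinearMap.congr_fun hL (Sum.elim v 0)
  have hclosed : IsClosed {w : ι ⊕ κ → ℂ | 0 ≤ star w ⬝ᵥ N *ᵥ w} :=
    isClosed_le continuous_const (by fun_prop)
  have hpos : {w | L w ≠ 0} ⊆ {w : ι ⊕ κ → ℂ | 0 ≤ star w ⬝ᵥ N *ᵥ w} :=
    fun w hw => (dotProduct_mulVec_pos_of_forall_posDef h hw).le
  have hdense := (LinearMap.dense_setOf_apply_ne_zero hL).closure_eq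
  exact posSemidef_of_forall_dotProduct_mulVec_nonneg fun w =>
    closure_minimal hpos hclosed (hdense ▸ Set.mem_univ w)

theorem range_fromRows_zero_le_range_of_forall_posDef (hN : N.IsHermitian)
    (h : ∀ X : Matrix π κ ℂ,
      (fromCols (1 : Matrix ι ι ℂ) (A * X) * N * (fromCols (1 : Matrix ι ι ℂ) (A * X))ᴴ).PosDef) :
    LinearMap.range (fromRows A (0 : Matrix κ π ℂ)).mulVecLin ≤ LinearMap.range N.mulVecLin := by
  rw [range_mulVecLin_le_range_iff, hN.eq]
  intro w hw
  rw [LinearMap.mem_ker, mulVecLin_apply] at hw ⊢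
  rw [conjTranspose_fromRows_zero_mulVec]
  by_contra hAw
  simpa [hw] using dotProduct_mulVec_pos_of_forall_posDef h hAw

theorem posDef_fromCols_one_mul_mul_conjTranspose (h₁₁ : N.toBlocks₁₁.PosDef)
    (hN : N.PosSemidef)
    (hrange : LinearMap.range (fromRows A (0 : Matrix κ π ℂ)).mulVecLin ≤
      LinearMap.range N.mulVecLin)
    (X : Matrix π κ ℂ) :
    (fromCols (1 : Matrix ι ι ℂ) (A * X) * N * (fromCols (1 : Matrix ι ι ℂ) (A * X))ᴴ).PosDef := by
  have hpsd := hN.mul_mul_conjTranspose_same (fromCols (1 : Matrix ι ι ℂ) (A * X))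
  refine posDef_iff_dotProduct_mulVec.mpr ⟨hpsd.isHermitian, fun v hv => ?_⟩
  refine (hpsd.dotProduct_mulVec_nonneg v).lt_of_ne fun hzero => ?_
  rw [dotProduct_fromCols_one_mul_mul_conjTranspose_mulVec] at hzero
  have hker := (hN.dotProduct_mulVec_zero_iff _).mp hzero.symm
  have hAv : Aᴴ *ᵥ v = 0 := by
    have hmem : Sum.elim v (Xᴴ *ᵥ (Aᴴ *ᵥ v)) ∈ LinearMap.ker Nᴴ.mulVecLin := by
      rwa [hN.isHermitian.eq, LinearMap.mem_ker, mulVecLin_apply]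
    have := range_mulVecLin_le_range_iff.mp hrange hmem
    rwa [LinearMap.mem_ker, mulVecLin_apply, conjTranspose_fromRows_zero_mulVec,
      Sum.elim_comp_inl] at this
  have h₁₁v := h₁₁.dotProduct_mulVec_pos hv
  rw [dotProduct_toBlocks₁₁_mulVec] at h₁₁v
  rw [hAv, mulVec_zero] at hzero
  exact h₁₁v.ne hzero

theorem forall_posDef_fromCols_one_mul_mul_conjTranspose_iff (hA : A ≠ 0) :
    (∀ X : Matrix π κ ℂ,
      (fromCols (1 : Matrix ι ι ℂ) (A * X) * N * (fromCols (1 : Matrix ι ι ℂ) (A * X))ᴴ).PosDef) ↔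
      N.toBlocks₁₁.PosDef ∧ N.PosSemidef ∧
        LinearMap.range (fromRows A (0 : Matrix κ π ℂ)).mulVecLin ≤
          LinearMap.range N.mulVecLin := by
  refine ⟨fun h => ?_, fun ⟨h₁₁, hN, hrange⟩ =>
    posDef_fromCols_one_mul_mul_conjTranspose h₁₁ hN hrange⟩
  have hN := posSemidef_of_forall_posDef hA h
  refine ⟨?_, hN, range_fromRows_zero_le_range_of_forall_posDef hN.isHermitian h⟩
  simpa [fromCols_one_zero_mul_mul_conjTranspose] using h 0

end Congruence

end Matrix

theorem stmt6_general {n m p q : ℕ}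
    (A : Matrix (Fin n) (Fin p) ℂ) (B : Matrix (Fin m) (Fin q) ℂ)
    (C : Matrix (Fin n) (Fin q) ℂ) (D : Matrix (Fin n) (Fin n) ℂ)
    (M : Matrix (Fin q) (Fin q) ℂ)
    (hA : A ≠ 0) :
    (∀ X : Matrix (Fin p) (Fin m) ℂ,
        ((A * X * B + C) * M * (A * X * B + C)ᴴ + D).PosDef) ↔
      (D + C * M * Cᴴ).PosDef ∧
      (fromBlocks (D + C * M * Cᴴ) (C * M * Bᴴ) (B * M * Cᴴ) (B * M * Bᴴ)).PosSemidef ∧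
      LinearMap.range (fromRows A (0 : Matrix (Fin m) (Fin p) ℂ)).mulVecLin ≤
        LinearMap.range
          (fromBlocks (D + C * M * Cᴴ) (C * M * Bᴴ) (B * M * Cᴴ) (B * M * Bᴴ)).mulVecLin := by
  simp only [mul_mul_conjTranspose_add_eq_fromCols_mul_fromBlocks]
  exact forall_posDef_fromCols_one_mul_mul_conjTranspose_iff hA

theorem stmt6 {n m p q : ℕ}
    (A : Matrix (Fin n) (Fin p) ℂ) (B : Matrix (Fin m) (Fin q) ℂ)
    (C : Matrix (Fin n) (Fin q) ℂ) (D : Matrix (Fin n) (Fin n) ℂ)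
    (M : Matrix (Fin q) (Fin q) ℂ)
    (hD : D.IsHermitian) (hM : M.IsHermitian)
    (hA : A ≠ 0) (hBMB : B * M * Bᴴ ≠ 0) :
    (∀ X : Matrix (Fin p) (Fin m) ℂ,
        ((A * X * B + C) * M * (A * X * B + C)ᴴ + D).PosDef) ↔
      (D + C * M * Cᴴ).PosDef ∧
      (fromBlocks (D + C * M * Cᴴ) (C * M * Bᴴ) (B * M * Cᴴ) (B * M * Bᴴ)).PosSemidef ∧
      LinearMap.range (fromRows A (0 : Matrix (Fin m) (Fin p) ℂ)).mulVecLin ≤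
        LinearMap.range
          (fromBlocks (D + C * M * Cᴴ) (C * M * Bᴴ) (B * M * Cᴴ) (B * M * Bᴴ)).mulVecLin :=
  stmt6_general A B C D M hA
end

section
/- Let A ∈ ℂ^{n×p}, B ∈ ℂ^{m×q}, C ∈ ℂ^{n×q}, Hermitian D ∈ ℂ^{n×n} and Hermitian M ∈ ℂ^{q×q} be given with A ≠ 0, and let φ(X) = (AXB + C)M(AXB + C)* + D for X ∈ ℂ^{p×m}. Then there exists an X̂ ∈ ℂ^{p×m} such that φ(X) ⪰ φ(X̂) for all X ∈ ℂ^{p×m} (a global minimizer in the Löwner partial ordering) if and only if BMB* ⪰ 0, ℛ(CMB*) ⊆ ℛ(A), and ℛ(BMC*) ⊆ ℛ(BMB*). -/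
/-!
Write `E = A X̂ B + C`. Then `φ(X̂ + Y) - φ(X̂) = (A Y) N (A Y)ᴴ + A Y Z + (A Y Z)ᴴ`
with `N = B M Bᴴ` and `Z = B M Eᴴ`. Replacing `Y` by `t • Y` and letting the complex scalar `t`
vary forces the cross term `A Y Z` to vanish for every `Y`, hence `Z = 0` because `A ≠ 0`; what
is left is positive semidefinite for every `Y` exactly when `N` is. So `X̂` is a minimizer iff
`N ⪰ 0` and `A X̂ N = -C M Bᴴ`, and a two-sided linear equation `A X N = G` is solvable iff the
column spaces of `G` and `Gᴴ` lie in those of `A` and `Nᴴ`, by means of a generalized inverse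
of `N`.
-/

open Matrix
open scoped ComplexOrder

theorem Complex.eq_zero_of_forall_quadratic_nonneg (a b : ℂ)
    (h : ∀ t : ℂ, 0 ≤ star t * t * a + t * b + star (t * b)) : b = 0 := by
  -- at `t = s * conj b`, `s` real, this is a real quadratic in `s` without constant term
  have key : ∀ s : ℝ, 0 ≤ normSq b * a.re * (s * s) + 2 * normSq b * s + 0 := fun s => by
    have := (Complex.le_def.1 (h (s * star b))).1
    simp only [zero_re, add_re, mul_re, mul_im, star_def, map_mul, conj_ofReal, conj_conj,
      ofReal_re, ofReal_im, conj_re, conj_im] at this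
    rw [normSq_apply]
    linarith
  have := discrim_le_zero key
  rw [discrim] at this
  have : normSq b = 0 := by nlinarith
  simpa using this

namespace Matrix

section Field

variable {K : Type*} [Field K] {k l m n : Type*}

theorem exists_mul_mul_self_eq [Fintype m] [Fintype n] (R : Matrix m n K) :
    ∃ S : Matrix n m K, R * S * R = R := by
  classical
  set f := toLin' R
  obtain ⟨g₀, hg₀⟩ :=
    f.rangeRestrict.exists_rightInverse_of_surjective f.range_rangeRestrict
  obtain ⟨g, hg⟩ := LinearMap.exists_extend g₀
  refine ⟨LinearMap.toMatrix' g, ?_⟩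
  have hfgf : f ∘ₗ g ∘ₗ f = f := LinearMap.ext fun x => by
    simpa [← hg] using
      congrArg Subtype.val (LinearMap.congr_fun hg₀ ⟨f x, LinearMap.mem_range_self f x⟩)
  apply_fun LinearMap.toMatrix' at hfgf
  simpa [f, LinearMap.toMatrix'_comp, Matrix.mul_assoc] using hfgf

theorem range_mulVecLin_mul_le [Fintype m] [Fintype n] (A : Matrix l m K) (V : Matrix m n K) :
    LinearMap.range (A * V).mulVecLin ≤ LinearMap.range A.mulVecLin := by
  rw [mulVecLin_mul]
  exact LinearMap.range_comp_le_range _ _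

theorem exists_mul_eq_of_range_le [Fintype l] [Fintype n] {A : Matrix m n K}
    {G : Matrix m l K} (h : LinearMap.range G.mulVecLin ≤ LinearMap.range A.mulVecLin) :
    ∃ V : Matrix n l K, A * V = G := by
  classical
  obtain ⟨h', hh'⟩ := Module.projective_lifting_property A.mulVecLin.rangeRestrict
    (G.mulVecLin.codRestrict _ fun x => h (LinearMap.mem_range_self _ x))
    A.mulVecLin.surjective_rangeRestrict
  refine ⟨LinearMap.toMatrix' h', ?_⟩
  have : toLin' A ∘ₗ h' = toLin' G := LinearMap.ext fun x =>
    congrArg Subtype.val (LinearMap.congr_fun hh' x)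
  apply_fun LinearMap.toMatrix' at this
  simpa [LinearMap.toMatrix'_comp] using this

theorem exists_mul_mul_eq_iff [StarRing K] [Fintype k] [Fintype l] [Fintype m] [Fintype n]
    {A : Matrix m n K} {B : Matrix k l K} {G : Matrix m l K} :
    (∃ X : Matrix n k K, A * X * B = G) ↔
      LinearMap.range G.mulVecLin ≤ LinearMap.range A.mulVecLin ∧
      LinearMap.range Gᴴ.mulVecLin ≤ LinearMap.range Bᴴ.mulVecLin := by
  constructor
  · rintro ⟨X, rfl⟩
    rw [Matrix.mul_assoc, conjTranspose_mul, conjTranspose_mul, Matrix.mul_assoc]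
    exact ⟨range_mulVecLin_mul_le _ _, range_mulVecLin_mul_le _ _⟩
  · rintro ⟨hA, hB⟩
    obtain ⟨V, hV⟩ := exists_mul_eq_of_range_le hA
    obtain ⟨W, hW⟩ := exists_mul_eq_of_range_le hB
    obtain ⟨P, hP⟩ := exists_mul_mul_self_eq B
    have hG : G = Wᴴ * B := by
      rw [← conjTranspose_conjTranspose G, ← hW, conjTranspose_mul, conjTranspose_conjTranspose]
    refine ⟨V * P, ?_⟩
    rw [← Matrix.mul_assoc, hV, hG, Matrix.mul_assoc, Matrix.mul_assoc, ← Matrix.mul_assoc B,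
      hP]

theorem exists_vecMul_mul_eq [Fintype m] [Fintype n] {G : Matrix m n K} (hG : G ≠ 0) :
    ∃ u : m → K, ∀ w : l → K, ∃ Y : Matrix n l K, u ᵥ* (G * Y) = w := by
  classical
  obtain ⟨i, j, hij⟩ : ∃ i j, G i j ≠ 0 := by
    by_contra! h
    exact hG (Matrix.ext h)
  refine ⟨Pi.single i 1, fun w => ⟨vecMulVec (Pi.single j (G i j)⁻¹) w, ?_⟩⟩
  rw [← vecMul_vecMul, single_one_vecMul, vecMul_vecMulVec]
  simp [hij]

theorem eq_zero_of_forall_mul_mul_eq_zero [Fintype m] [Fintype n] [Fintype l]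
    {G : Matrix m n K} (hG : G ≠ 0) {Z : Matrix l k K} (h : ∀ Y : Matrix n l K, G * Y * Z = 0) :
    Z = 0 := by
  classical
  obtain ⟨u, hu⟩ := exists_vecMul_mul_eq (l := l) hG
  ext i j
  obtain ⟨Y, hY⟩ := hu (Pi.single i 1)
  simpa [← single_one_vecMul, ← hY, vecMul_vecMul, h] using
    (congrFun (single_one_vecMul i Z) j).symm

end Field

theorem add_mul_mul_conjTranspose_add_sub {R m n : Type*} [Ring R] [StarRing R] [Fintype n]
    {M : Matrix n n R} (hM : M.IsHermitian) (E F : Matrix m n R) :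
    (E + F) * M * (E + F)ᴴ - E * M * Eᴴ = F * M * Fᴴ + F * M * Eᴴ + (F * M * Eᴴ)ᴴ := by
  simp only [conjTranspose_add, conjTranspose_mul, conjTranspose_conjTranspose, hM.eq,
    Matrix.mul_add, Matrix.add_mul, Matrix.mul_assoc]
  abel

section Complex

variable {m n p q : Type*} [Fintype m] [Fintype n] [Fintype p] [Fintype q]

theorem eq_zero_of_forall_star_dotProduct_mulVec_eq_zero {Q : Matrix n n ℂ}
    (h : ∀ v, star v ⬝ᵥ Q *ᵥ v = 0) : Q = 0 := by
  classical
  have : toEuclideanLin Q = 0 := (inner_map_self_eq_zero _).1 fun x => by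
    rw [← inner_conj_symm, EuclideanSpace.inner_eq_star_dotProduct, ofLp_toLpLin, toLin'_apply,
      dotProduct_comm, h, map_zero]
  simpa using this

theorem eq_zero_of_forall_posSemidef_smul {P Q : Matrix n n ℂ}
    (h : ∀ t : ℂ, ((star t * t) • P + t • Q + (t • Q)ᴴ).PosSemidef) : Q = 0 := by
  refine eq_zero_of_forall_star_dotProduct_mulVec_eq_zero fun v =>
    Complex.eq_zero_of_forall_quadratic_nonneg (star v ⬝ᵥ P *ᵥ v) _ fun t => ?_
  have hconj : star v ⬝ᵥ (t • Q)ᴴ *ᵥ v = star (star v ⬝ᵥ (t • Q) *ᵥ v) := by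
    rw [star_dotProduct, star_mulVec, dotProduct_mulVec, conjTranspose_conjTranspose]
  simpa only [add_mulVec, dotProduct_add, hconj, smul_mulVec, dotProduct_smul, smul_eq_mul]
    using (h t).dotProduct_mulVec_nonneg v

theorem posSemidef_of_forall_posSemidef_mul_mul_conjTranspose {G : Matrix m p ℂ} (hG : G ≠ 0)
    {N : Matrix n n ℂ} (hN : N.IsHermitian)
    (h : ∀ Y : Matrix p n ℂ, (G * Y * N * (G * Y)ᴴ).PosSemidef) : N.PosSemidef := by
  obtain ⟨u, hu⟩ := exists_vecMul_mul_eq (l := n) hG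
  refine .of_dotProduct_mulVec_nonneg hN fun w => ?_
  obtain ⟨Y, hY⟩ := hu (star w)
  simpa only [← mulVec_mulVec, dotProduct_mulVec, ← star_vecMul, vecMul_vecMul, hY, star_star]
    using (h Y).dotProduct_mulVec_nonneg (star u)

theorem forall_posSemidef_add_iff {G : Matrix m p ℂ} (hG : G ≠ 0) {N : Matrix n n ℂ}
    (hN : N.IsHermitian) (Z : Matrix n m ℂ) :
    (∀ Y : Matrix p n ℂ, (G * Y * N * (G * Y)ᴴ + G * Y * Z + (G * Y * Z)ᴴ).PosSemidef) ↔
      N.PosSemidef ∧ Z = 0 := by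
  refine ⟨fun h => ?_, fun ⟨hN, hZ⟩ Y => by
    simpa [hZ] using hN.mul_mul_conjTranspose_same (G * Y)⟩
  have hZ : Z = 0 := eq_zero_of_forall_mul_mul_eq_zero hG fun Y =>
    eq_zero_of_forall_posSemidef_smul (P := G * Y * N * (G * Y)ᴴ) fun t => by
      simpa [Matrix.mul_smul, Matrix.smul_mul, conjTranspose_smul, smul_smul, mul_comm]
        using h (t • Y)
  subst hZ
  exact ⟨posSemidef_of_forall_posSemidef_mul_mul_conjTranspose hG hN fun Y => by simpa using h Y,
    rfl⟩

theorem forall_posSemidef_sub_iff {A : Matrix n p ℂ} (hA : A ≠ 0) (B : Matrix m q ℂ)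
    (C : Matrix n q ℂ) {M : Matrix q q ℂ} (hM : M.IsHermitian) (X₀ : Matrix p m ℂ) :
    (∀ X : Matrix p m ℂ, ((A * X * B + C) * M * (A * X * B + C)ᴴ -
        (A * X₀ * B + C) * M * (A * X₀ * B + C)ᴴ).PosSemidef) ↔
      (B * M * Bᴴ).PosSemidef ∧ A * X₀ * (B * M * Bᴴ) = -(C * M * Bᴴ) := by
  set E := A * X₀ * B + C
  have hdiff (Y : Matrix p m ℂ) :
      (A * (X₀ + Y) * B + C) * M * (A * (X₀ + Y) * B + C)ᴴ - E * M * Eᴴ =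
        A * Y * (B * M * Bᴴ) * (A * Y)ᴴ + A * Y * (B * M * Eᴴ) + (A * Y * (B * M * Eᴴ))ᴴ := by
    have : A * (X₀ + Y) * B + C = E + A * Y * B := by
      simp only [E, Matrix.mul_add, Matrix.add_mul]; abel
    rw [this, add_mul_mul_conjTranspose_add_sub hM, conjTranspose_mul (A * Y)]
    simp only [Matrix.mul_assoc]
  have hZ : B * M * Eᴴ = 0 ↔ A * X₀ * (B * M * Bᴴ) = -(C * M * Bᴴ) := by
    rw [← conjTranspose_eq_zero, ← add_eq_zero_iff_eq_neg]
    simp only [E, conjTranspose_mul, conjTranspose_conjTranspose, hM.eq, Matrix.add_mul,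
      Matrix.mul_assoc]
  rw [← (Equiv.addLeft X₀).forall_congr_right]
  simp only [Equiv.coe_addLeft, hdiff]
  rw [forall_posSemidef_add_iff hA (isHermitian_mul_mul_conjTranspose B hM), hZ]

end Complex

end Matrix

theorem stmt10_general {n m p q : ℕ}
    (A : Matrix (Fin n) (Fin p) ℂ) (B : Matrix (Fin m) (Fin q) ℂ)
    (C : Matrix (Fin n) (Fin q) ℂ) (D : Matrix (Fin n) (Fin n) ℂ)
    (M : Matrix (Fin q) (Fin q) ℂ)
    (hM : M.IsHermitian) (hA : A ≠ 0) :
    (∃ Xhat : Matrix (Fin p) (Fin m) ℂ,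
        ∀ X : Matrix (Fin p) (Fin m) ℂ,
          (((A * X * B + C) * M * (A * X * B + C)ᴴ + D) -
            ((A * Xhat * B + C) * M * (A * Xhat * B + C)ᴴ + D)).PosSemidef) ↔
      (B * M * Bᴴ).PosSemidef ∧
      LinearMap.range (C * M * Bᴴ).mulVecLin ≤ LinearMap.range A.mulVecLin ∧
      LinearMap.range (B * M * Cᴴ).mulVecLin ≤ LinearMap.range (B * M * Bᴴ).mulVecLin := by
  have hCMB : (C * M * Bᴴ)ᴴ = B * M * Cᴴ := by
    simp only [conjTranspose_mul, conjTranspose_conjTranspose, hM.eq, Matrix.mul_assoc]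
  simp only [add_sub_add_right_eq_sub, forall_posSemidef_sub_iff hA B C hM, exists_and_left]
  rw [← (Equiv.neg _).exists_congr_right]
  simp only [Equiv.neg_apply, Matrix.mul_neg, Matrix.neg_mul, neg_inj]
  rw [exists_mul_mul_eq_iff, hCMB, (isHermitian_mul_mul_conjTranspose B hM).eq]

theorem stmt10 {n m p q : ℕ}
    (A : Matrix (Fin n) (Fin p) ℂ) (B : Matrix (Fin m) (Fin q) ℂ)
    (C : Matrix (Fin n) (Fin q) ℂ) (D : Matrix (Fin n) (Fin n) ℂ)
    (M : Matrix (Fin q) (Fin q) ℂ)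
    (hD : D.IsHermitian) (hM : M.IsHermitian) (hA : A ≠ 0) :
    (∃ Xhat : Matrix (Fin p) (Fin m) ℂ,
        ∀ X : Matrix (Fin p) (Fin m) ℂ,
          (((A * X * B + C) * M * (A * X * B + C)ᴴ + D) -
            ((A * Xhat * B + C) * M * (A * Xhat * B + C)ᴴ + D)).PosSemidef) ↔
      (B * M * Bᴴ).PosSemidef ∧
      LinearMap.range (C * M * Bᴴ).mulVecLin ≤ LinearMap.range A.mulVecLin ∧
      LinearMap.range (B * M * Cᴴ).mulVecLin ≤ LinearMap.range (B * M * Bᴴ).mulVecLin :=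
  stmt10_general A B C D M hM hA
end

section
/- Let A ∈ ℂ^{n×p}, B ∈ ℂ^{m×q}, C ∈ ℂ^{n×q}, Hermitian D ∈ ℂ^{n×n} and Hermitian M ∈ ℂ^{q×q} be given with A ≠ 0 and BMB* ≠ 0, and let φ(X) = (AXB + C)M(AXB + C)* + D for X ∈ ℂ^{p×m}. Then: (i) φ((1/2)X₁ + (1/2)X₂) ⪯ (1/2)φ(X₁) + (1/2)φ(X₂) holds for all X₁, X₂ ∈ ℂ^{p×m} (φ is midpoint-convex in the Löwner ordering) if and only if BMB* ⪰ 0; (ii) φ((1/2)X₁ + (1/2)X₂) ⪰ (1/2)φ(X₁) + (1/2)φ(X₂) holds for all X₁, X₂ ∈ ℂ^{p×m} (φ is midpoint-concave in the Löwner ordering) if and only if BMB* ⪯ 0. -/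
/-!
The midpoint gap of `φ` is a congruence of `BMBᴴ`: with `W = A (X₁ - X₂) / 2`,
`½ φ(X₁) + ½ φ(X₂) - φ(½ X₁ + ½ X₂) = W (BMBᴴ) Wᴴ`, and `W` ranges over all matrices `A Z`.
Congruences preserve positivity, and conversely, since `A ≠ 0`, the matrices `(AZ)ᴴ` map a
suitable vector `x` onto every vector `u`, so `u* (BMBᴴ) u = x* (AZ) (BMBᴴ) (AZ)ᴴ x ≥ 0`.
-/

open Matrix
open scoped ComplexOrder

namespace Matrix

theorem exists_mulVec_eq_of_ne_zero {m n K : Type*} [Fintype n] [Field K] {v : n → K}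
    (hv : v ≠ 0) (u : m → K) : ∃ T : Matrix m n K, T *ᵥ v = u := by
  classical
  obtain ⟨j, hj⟩ := Function.ne_iff.mp hv
  refine ⟨vecMulVec u (Pi.single j (v j)⁻¹), ?_⟩
  rw [vecMulVec_mulVec, single_dotProduct, inv_mul_cancel₀ hj, MulOpposite.op_one, one_smul]

variable {𝕜 : Type*} [RCLike 𝕜]

theorem exists_conjTranspose_mulVec_ne_zero {m n : Type*} [Fintype m] {A : Matrix m n 𝕜}
    (hA : A ≠ 0) : ∃ x, Aᴴ *ᵥ x ≠ 0 := by
  by_contra! h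
  exact hA (conjTranspose_eq_zero.mp (ext_iff_mulVec.mpr fun x => by simp [h x]))

theorem posSemidef_of_forall_posSemidef_mul_mul_conjTranspose_s14 {l m n : Type*} [Fintype l]
    [Fintype m] [Fintype n] {A : Matrix l m 𝕜} {N : Matrix n n 𝕜} (hA : A ≠ 0)
    (hN : N.IsHermitian) (h : ∀ Z : Matrix m n 𝕜, (A * Z * N * (A * Z)ᴴ).PosSemidef) :
    N.PosSemidef := by
  refine .of_dotProduct_mulVec_nonneg hN fun u => ?_
  obtain ⟨x, hx⟩ := exists_conjTranspose_mulVec_ne_zero hA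
  obtain ⟨T, rfl⟩ := exists_mulVec_eq_of_ne_zero hx u
  simpa only [star_mulVec, dotProduct_mulVec, vecMul_vecMul, ← Matrix.mul_assoc,
    conjTranspose_mul, conjTranspose_conjTranspose, ← mulVec_mulVec]
    using (h Tᴴ).dotProduct_mulVec_nonneg x

theorem forall_posSemidef_mul_mul_conjTranspose_iff {l m n : Type*} [Fintype l]
    [Fintype m] [Fintype n] {A : Matrix l m 𝕜} {N : Matrix n n 𝕜} (hA : A ≠ 0)
    (hN : N.IsHermitian) :
    (∀ Z : Matrix m n 𝕜, (A * Z * N * (A * Z)ᴴ).PosSemidef) ↔ N.PosSemidef :=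
  ⟨posSemidef_of_forall_posSemidef_mul_mul_conjTranspose_s14 hA hN,
    fun hN _ => hN.mul_mul_conjTranspose_same _⟩

theorem half_add_half_sub_midpoint_eq {n p m q : Type*} [Fintype p] [Fintype m] [Fintype q]
    (A : Matrix n p 𝕜) (B : Matrix m q 𝕜) (C : Matrix n q 𝕜) (D : Matrix n n 𝕜)
    (M : Matrix q q 𝕜) (X₁ X₂ : Matrix p m 𝕜) :
    ((1/2 : 𝕜) • ((A * X₁ * B + C) * M * (A * X₁ * B + C)ᴴ + D) +
        (1/2 : 𝕜) • ((A * X₂ * B + C) * M * (A * X₂ * B + C)ᴴ + D)) -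
      ((A * ((1/2 : 𝕜) • X₁ + (1/2 : 𝕜) • X₂) * B + C) * M *
          (A * ((1/2 : 𝕜) • X₁ + (1/2 : 𝕜) • X₂) * B + C)ᴴ + D) =
      A * ((1/2 : 𝕜) • (X₁ - X₂)) * (B * M * Bᴴ) * (A * ((1/2 : 𝕜) • (X₁ - X₂)))ᴴ := by
  simp only [Matrix.mul_add, Matrix.add_mul, Matrix.mul_smul, Matrix.smul_mul,
    conjTranspose_add, conjTranspose_smul, Matrix.mul_sub, Matrix.sub_mul,
    conjTranspose_mul, conjTranspose_sub, smul_add, smul_sub, smul_smul, Matrix.mul_assoc,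
    star_div₀, star_one, star_ofNat]
  module

theorem midpoint_sub_half_add_half_eq {n p m q : Type*} [Fintype p] [Fintype m] [Fintype q]
    (A : Matrix n p 𝕜) (B : Matrix m q 𝕜) (C : Matrix n q 𝕜) (D : Matrix n n 𝕜)
    (M : Matrix q q 𝕜) (X₁ X₂ : Matrix p m 𝕜) :
    ((A * ((1/2 : 𝕜) • X₁ + (1/2 : 𝕜) • X₂) * B + C) * M *
          (A * ((1/2 : 𝕜) • X₁ + (1/2 : 𝕜) • X₂) * B + C)ᴴ + D) -
      ((1/2 : 𝕜) • ((A * X₁ * B + C) * M * (A * X₁ * B + C)ᴴ + D) +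
        (1/2 : 𝕜) • ((A * X₂ * B + C) * M * (A * X₂ * B + C)ᴴ + D)) =
      A * ((1/2 : 𝕜) • (X₁ - X₂)) * -(B * M * Bᴴ) * (A * ((1/2 : 𝕜) • (X₁ - X₂)))ᴴ := by
  rw [← neg_sub, half_add_half_sub_midpoint_eq, Matrix.mul_neg, Matrix.neg_mul]

end Matrix

theorem stmt14_general {n m p q : ℕ}
    (A : Matrix (Fin n) (Fin p) ℂ) (B : Matrix (Fin m) (Fin q) ℂ)
    (C : Matrix (Fin n) (Fin q) ℂ) (D : Matrix (Fin n) (Fin n) ℂ)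
    (M : Matrix (Fin q) (Fin q) ℂ)
    (hM : M.IsHermitian)
    (hA : A ≠ 0) :
    ((∀ X₁ X₂ : Matrix (Fin p) (Fin m) ℂ,
        (((1/2 : ℂ) • ((A * X₁ * B + C) * M * (A * X₁ * B + C)ᴴ + D) +
            (1/2 : ℂ) • ((A * X₂ * B + C) * M * (A * X₂ * B + C)ᴴ + D)) -
          ((A * ((1/2 : ℂ) • X₁ + (1/2 : ℂ) • X₂) * B + C) * M *
              (A * ((1/2 : ℂ) • X₁ + (1/2 : ℂ) • X₂) * B + C)ᴴ + D)).PosSemidef) ↔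
      (B * M * Bᴴ).PosSemidef) ∧
    ((∀ X₁ X₂ : Matrix (Fin p) (Fin m) ℂ,
        (((A * ((1/2 : ℂ) • X₁ + (1/2 : ℂ) • X₂) * B + C) * M *
              (A * ((1/2 : ℂ) • X₁ + (1/2 : ℂ) • X₂) * B + C)ᴴ + D) -
          ((1/2 : ℂ) • ((A * X₁ * B + C) * M * (A * X₁ * B + C)ᴴ + D) +
            (1/2 : ℂ) • ((A * X₂ * B + C) * M * (A * X₂ * B + C)ᴴ + D))).PosSemidef) ↔
      (-(B * M * Bᴴ)).PosSemidef) := by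
  have hN : (B * M * Bᴴ).IsHermitian := isHermitian_mul_mul_conjTranspose B hM
  have forall_half_sub_iff (P : Matrix (Fin p) (Fin m) ℂ → Prop) :
      (∀ X₁ X₂, P ((1/2 : ℂ) • (X₁ - X₂))) ↔ ∀ Z, P Z :=
    ⟨fun h Z => by simpa [smul_smul] using h ((2 : ℂ) • Z) 0, fun h _ _ => h _⟩
  simp_rw [half_add_half_sub_midpoint_eq, midpoint_sub_half_add_half_eq]
  exact ⟨(forall_half_sub_iff _).trans (forall_posSemidef_mul_mul_conjTranspose_iff hA hN),
    (forall_half_sub_iff _).trans (forall_posSemidef_mul_mul_conjTranspose_iff hA hN.neg)⟩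

theorem stmt14 {n m p q : ℕ}
    (A : Matrix (Fin n) (Fin p) ℂ) (B : Matrix (Fin m) (Fin q) ℂ)
    (C : Matrix (Fin n) (Fin q) ℂ) (D : Matrix (Fin n) (Fin n) ℂ)
    (M : Matrix (Fin q) (Fin q) ℂ)
    (hD : D.IsHermitian) (hM : M.IsHermitian)
    (hA : A ≠ 0) (hBMB : B * M * Bᴴ ≠ 0) :
    ((∀ X₁ X₂ : Matrix (Fin p) (Fin m) ℂ,
        (((1/2 : ℂ) • ((A * X₁ * B + C) * M * (A * X₁ * B + C)ᴴ + D) +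
            (1/2 : ℂ) • ((A * X₂ * B + C) * M * (A * X₂ * B + C)ᴴ + D)) -
          ((A * ((1/2 : ℂ) • X₁ + (1/2 : ℂ) • X₂) * B + C) * M *
              (A * ((1/2 : ℂ) • X₁ + (1/2 : ℂ) • X₂) * B + C)ᴴ + D)).PosSemidef) ↔
      (B * M * Bᴴ).PosSemidef) ∧
    ((∀ X₁ X₂ : Matrix (Fin p) (Fin m) ℂ,
        (((A * ((1/2 : ℂ) • X₁ + (1/2 : ℂ) • X₂) * B + C) * M *
              (A * ((1/2 : ℂ) • X₁ + (1/2 : ℂ) • X₂) * B + C)ᴴ + D) -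
          ((1/2 : ℂ) • ((A * X₁ * B + C) * M * (A * X₁ * B + C)ᴴ + D) +
            (1/2 : ℂ) • ((A * X₂ * B + C) * M * (A * X₂ * B + C)ᴴ + D))).PosSemidef) ↔
      (-(B * M * Bᴴ)).PosSemidef) :=
  stmt14_general A B C D M hM hA
end

section
/- Let k ≥ 1 and for i = 1,…,k let A_i ∈ ℂ^{n×p_i} with A_i ≠ 0 and B_i ∈ ℂ^{m_i×q}; let C ∈ ℂ^{n×q}, Hermitian D ∈ ℂ^{n×n} and Hermitian M ∈ ℂ^{q×q} be given. Define φ(X₁,…,X_k) = (Σ_{i=1}^k A_iX_iB_i + C)M(Σ_{i=1}^k A_iX_iB_i + C)* + D for X_i ∈ ℂ^{p_i×m_i}, let B = [B₁; … ; B_k] be the stacked (m₁+…+m_k)×q column block matrix, and let N = [D+CMC*, CMB*; BMC*, BMB*]. Then φ(X₁,…,X_k) ⪰ 0 for all X₁,…,X_k if and only if N ⪰ 0; dually, φ(X₁,…,X_k) ⪯ 0 for all X₁,…,X_k if and only if N ⪯ 0. -/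
open Matrix
open scoped ComplexOrder

/-!
With `T = [1 | A₁X₁ ⋯ A_kX_k]` one has `φ(X) = T N Tᴴ`, so `N ⪰ 0` gives `φ(X) ⪰ 0`.
Conversely, `x* φ(X) x` is the quadratic form of `N` at `Tᴴ x = (x, (X_iᴴ A_iᴴ x)_i)`. As soon
as no `A_iᴴ x` vanishes, the second component can be made any `y` by the choice of `X`, so the
form of `N` is nonnegative at `(x, y)` for all `x` off finitely many proper subspaces, hence for
all `x` by density and continuity. The case `⪯` is the same for `-N`, as `-φ(X) = T (-N) Tᴴ`.
-/

namespace Matrix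

section SigmaBlocks

variable {R ι m q : Type*} {n : ι → Type*}

def fromSigmaCols (W : ∀ i, Matrix m (n i) R) : Matrix m (Σ i, n i) R :=
  of fun r j => W j.1 r j.2

def fromSigmaRows (B : ∀ i, Matrix (n i) q R) : Matrix (Σ i, n i) q R :=
  of fun j c => B j.1 j.2 c

lemma conjTranspose_fromSigmaCols [Star R] (W : ∀ i, Matrix m (n i) R) :
    (fromSigmaCols W)ᴴ = fromSigmaRows fun i => (W i)ᴴ :=
  rfl

lemma fromSigmaRows_mulVec [NonUnitalNonAssocSemiring R] [Fintype m]
    (B : ∀ i, Matrix (n i) m R) (v : m → R) :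
    fromSigmaRows B *ᵥ v = fun j => (B j.1 *ᵥ v) j.2 :=
  rfl

lemma fromSigmaCols_mul_fromSigmaRows [NonUnitalNonAssocSemiring R] [Fintype ι]
    [∀ i, Fintype (n i)] (W : ∀ i, Matrix m (n i) R) (B : ∀ i, Matrix (n i) q R) :
    fromSigmaCols W * fromSigmaRows B = ∑ i, W i * B i := by
  ext r c
  simp only [mul_apply, fromSigmaCols, fromSigmaRows, of_apply, sum_apply]
  exact Fintype.sum_sigma _

end SigmaBlocks

-- Without the ascription `(1 : Matrix m m R)`, the `1` in `fromCols 1 W * _` is elaborated as a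
-- `CStarMatrix`.
lemma fromCols_one_mul_fromBlocks_mul_conjTranspose {R m κ q : Type*} [CommRing R] [StarRing R]
    [Fintype m] [Fintype κ] [Fintype q] [DecidableEq m]
    (W : Matrix m κ R) (B : Matrix κ q R) (C : Matrix m q R) (D : Matrix m m R)
    (M : Matrix q q R) :
    fromCols (1 : Matrix m m R) W * fromBlocks (D + C * M * Cᴴ) (C * M * Bᴴ) (B * M * Cᴴ)
        (B * M * Bᴴ) * (fromCols (1 : Matrix m m R) W)ᴴ =
      (W * B + C) * M * (W * B + C)ᴴ + D := by
  rw [fromCols_mul_fromBlocks, conjTranspose_fromCols_eq_fromRows_conjTranspose,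
    fromCols_mul_fromRows]
  simp only [Matrix.one_mul, conjTranspose_one, Matrix.mul_one, conjTranspose_add,
    conjTranspose_mul, Matrix.add_mul, Matrix.mul_add, Matrix.mul_assoc]
  abel

lemma exists_mulVec_eq_of_ne_zero_s15 {K m κ : Type*} [DivisionRing K] [Fintype m]
    {a : m → K} (ha : a ≠ 0) (y : κ → K) : ∃ Y : Matrix κ m K, Y *ᵥ a = y := by
  classical
  obtain ⟨j, hj⟩ := Function.ne_iff.mp ha
  refine ⟨vecMulVec y (Pi.single j (a j)⁻¹), ?_⟩
  rw [vecMulVec_mulVec, single_dotProduct, inv_mul_cancel₀ hj]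
  simp

lemma dense_setOf_forall_mulVec_ne_zero {𝕜 ι m : Type*} [NontriviallyNormedField 𝕜]
    [CompleteSpace 𝕜] [Finite ι] [Fintype m] {p : ι → Type*} [∀ i, Fintype (p i)]
    (A : ∀ i, Matrix (p i) m 𝕜) (hA : ∀ i, A i ≠ 0) :
    Dense {x : m → 𝕜 | ∀ i, A i *ᵥ x ≠ 0} := by
  classical
  simp only [Set.ofPred_forall]
  refine dense_iInter_of_isOpen (fun i => ?_) fun i => ?_
  · exact isOpen_ne_fun (continuous_const.matrix_mulVec continuous_id) continuous_const
  · change Dense ((LinearMap.ker (mulVecLin (A i)) : Set (m → 𝕜)))ᶜ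
    refine interior_eq_empty_iff_dense_compl.mp (Set.not_nonempty_iff_eq_empty.mp fun h => hA i ?_)
    have := (LinearMap.ker (mulVecLin (A i))).eq_top_of_nonempty_interior' h
    exact toLin'.map_eq_zero_iff.mp (LinearMap.ker_eq_top.mp this)

lemma exists_conjTranspose_fromSigmaCols_mul_mulVec_eq {K ι m : Type*} [Field K] [StarRing K]
    [Fintype m] {p n : ι → Type*} [∀ i, Fintype (p i)] (A : ∀ i, Matrix m (p i) K)
    {x : m → K} (hx : ∀ i, (A i)ᴴ *ᵥ x ≠ 0) (y : (Σ i, n i) → K) :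
    ∃ X : ∀ i, Matrix (p i) (n i) K, (fromSigmaCols fun i => A i * X i)ᴴ *ᵥ x = y := by
  choose Y hY using fun i => exists_mulVec_eq_of_ne_zero_s15 (hx i) fun j => y ⟨i, j⟩
  refine ⟨fun i => (Y i)ᴴ, ?_⟩
  ext ⟨i, j⟩
  simp [conjTranspose_fromSigmaCols, fromSigmaRows_mulVec, conjTranspose_mul, ← mulVec_mulVec, hY]

lemma dotProduct_mul_mul_conjTranspose_mulVec_s15 {R m n : Type*} [Semiring R] [StarRing R]
    [Fintype m] [Fintype n] (A : Matrix n n R) (T : Matrix m n R) (x : m → R) :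
    star x ⬝ᵥ (T * A * Tᴴ) *ᵥ x = star (Tᴴ *ᵥ x) ⬝ᵥ A *ᵥ (Tᴴ *ᵥ x) := by
  simp [star_mulVec, dotProduct_mulVec, vecMul_vecMul, Matrix.mul_assoc]

section Conjugation

variable {𝕜 m κ P : Type*} [RCLike 𝕜] [Fintype m] [Fintype κ] [DecidableEq m]

theorem PosSemidef.of_forall_posSemidef_fromCols_one_mul_mul_conjTranspose
    {N : Matrix (m ⊕ κ) (m ⊕ κ) 𝕜} (hN : N.IsHermitian) (W : P → Matrix m κ 𝕜)
    (hW : Dense {x : m → 𝕜 | ∀ y, ∃ p, (W p)ᴴ *ᵥ x = y})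
    (h : ∀ p, (fromCols (1 : Matrix m m 𝕜) (W p) * N *
      (fromCols (1 : Matrix m m 𝕜) (W p))ᴴ).PosSemidef) :
    N.PosSemidef := by
  refine .of_dotProduct_mulVec_nonneg hN fun v => ?_
  let f : (m → 𝕜) → 𝕜 := fun x => star (Sum.elim x (v ∘ Sum.inr)) ⬝ᵥ
    N *ᵥ Sum.elim x (v ∘ Sum.inr)
  have hf : Continuous f := by
    have : Continuous fun x : m → 𝕜 => Sum.elim x (v ∘ Sum.inr) :=
      continuous_pi fun j => by
        cases j <;> simp only [Sum.elim_inl, Sum.elim_inr] <;> fun_prop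
    exact this.star.dotProduct (continuous_const.matrix_mulVec this)
  have hgood : {x : m → 𝕜 | ∀ y, ∃ p, (W p)ᴴ *ᵥ x = y} ⊆ f ⁻¹' Set.Ici 0 := by
    intro x hx
    obtain ⟨p, hp⟩ := hx (v ∘ Sum.inr)
    have hT : (fromCols (1 : Matrix m m 𝕜) (W p))ᴴ *ᵥ x = Sum.elim x (v ∘ Sum.inr) := by
      rw [conjTranspose_fromCols_eq_fromRows_conjTranspose, fromRows_mulVec, conjTranspose_one,
        one_mulVec, hp]
    have := (h p).dotProduct_mulVec_nonneg x
    rwa [dotProduct_mul_mul_conjTranspose_mulVec_s15, hT] at this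
  have hv := (isClosed_Ici.preimage hf).closure_subset_iff.mpr hgood
    (hW.closure_eq ▸ Set.mem_univ (v ∘ Sum.inl))
  simpa [f] using hv

theorem forall_posSemidef_fromCols_one_mul_mul_conjTranspose_iff
    {N : Matrix (m ⊕ κ) (m ⊕ κ) 𝕜} (hN : N.IsHermitian) (W : P → Matrix m κ 𝕜)
    (hW : Dense {x : m → 𝕜 | ∀ y, ∃ p, (W p)ᴴ *ᵥ x = y}) :
    (∀ p, (fromCols (1 : Matrix m m 𝕜) (W p) * N *
      (fromCols (1 : Matrix m m 𝕜) (W p))ᴴ).PosSemidef) ↔ N.PosSemidef :=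
  ⟨.of_forall_posSemidef_fromCols_one_mul_mul_conjTranspose hN W hW,
    fun hN' _ => hN'.mul_mul_conjTranspose_same _⟩

end Conjugation

end Matrix

theorem stmt15_general {k n q : ℕ} {pdim mdim : Fin k → ℕ}
    (A : ∀ i : Fin k, Matrix (Fin n) (Fin (pdim i)) ℂ)
    (B : ∀ i : Fin k, Matrix (Fin (mdim i)) (Fin q) ℂ)
    (C : Matrix (Fin n) (Fin q) ℂ) (D : Matrix (Fin n) (Fin n) ℂ)
    (M : Matrix (Fin q) (Fin q) ℂ)
    (hD : D.IsHermitian) (hM : M.IsHermitian)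
    (hA : ∀ i, A i ≠ 0)
    (Bbig : Matrix ((i : Fin k) × Fin (mdim i)) (Fin q) ℂ)
    (hBbig : ∀ (j : (i : Fin k) × Fin (mdim i)) (l : Fin q), Bbig j l = B j.1 j.2 l) :
    ((∀ X : ∀ i : Fin k, Matrix (Fin (pdim i)) (Fin (mdim i)) ℂ,
        (((∑ i, A i * X i * B i) + C) * M * ((∑ i, A i * X i * B i) + C)ᴴ + D).PosSemidef) ↔
      (fromBlocks (D + C * M * Cᴴ) (C * M * Bbigᴴ)
        (Bbig * M * Cᴴ) (Bbig * M * Bbigᴴ)).PosSemidef) ∧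
    ((∀ X : ∀ i : Fin k, Matrix (Fin (pdim i)) (Fin (mdim i)) ℂ,
        (-(((∑ i, A i * X i * B i) + C) * M * ((∑ i, A i * X i * B i) + C)ᴴ + D)).PosSemidef) ↔
      (-(fromBlocks (D + C * M * Cᴴ) (C * M * Bbigᴴ)
          (Bbig * M * Cᴴ) (Bbig * M * Bbigᴴ))).PosSemidef) := by
  obtain rfl : Bbig = fromSigmaRows B := Matrix.ext hBbig
  set N := fromBlocks (D + C * M * Cᴴ) (C * M * (fromSigmaRows B)ᴴ) (fromSigmaRows B * M * Cᴴ)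
    (fromSigmaRows B * M * (fromSigmaRows B)ᴴ)
  have hN : N.IsHermitian :=
    (hD.add (isHermitian_mul_mul_conjTranspose C hM)).fromBlocks (by simp [Matrix.mul_assoc, hM.eq])
      (isHermitian_mul_mul_conjTranspose _ hM)
  let W (X : ∀ i, Matrix (Fin (pdim i)) (Fin (mdim i)) ℂ) := fromSigmaCols fun i => A i * X i
  have hW : Dense {x | ∀ y, ∃ X, (W X)ᴴ *ᵥ x = y} :=
    (dense_setOf_forall_mulVec_ne_zero _ fun i => conjTranspose_eq_zero.not.mpr (hA i)).mono
      fun x hx => exists_conjTranspose_fromSigmaCols_mul_mulVec_eq A hx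
  have hφ : ∀ X, ((∑ i, A i * X i * B i) + C) * M * ((∑ i, A i * X i * B i) + C)ᴴ + D =
      fromCols (1 : Matrix (Fin n) (Fin n) ℂ) (W X) * N *
        (fromCols (1 : Matrix (Fin n) (Fin n) ℂ) (W X))ᴴ := fun X => by
    rw [fromCols_one_mul_fromBlocks_mul_conjTranspose, fromSigmaCols_mul_fromSigmaRows]
  constructor
  · simpa only [hφ] using forall_posSemidef_fromCols_one_mul_mul_conjTranspose_iff hN W hW
  · simpa only [hφ, Matrix.mul_neg, Matrix.neg_mul] using
      forall_posSemidef_fromCols_one_mul_mul_conjTranspose_iff hN.neg W hW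

theorem stmt15 {k n q : ℕ} (hk : 1 ≤ k) {pdim mdim : Fin k → ℕ}
    (A : ∀ i : Fin k, Matrix (Fin n) (Fin (pdim i)) ℂ)
    (B : ∀ i : Fin k, Matrix (Fin (mdim i)) (Fin q) ℂ)
    (C : Matrix (Fin n) (Fin q) ℂ) (D : Matrix (Fin n) (Fin n) ℂ)
    (M : Matrix (Fin q) (Fin q) ℂ)
    (hD : D.IsHermitian) (hM : M.IsHermitian)
    (hA : ∀ i, A i ≠ 0)
    (Bbig : Matrix ((i : Fin k) × Fin (mdim i)) (Fin q) ℂ)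
    (hBbig : ∀ (j : (i : Fin k) × Fin (mdim i)) (l : Fin q), Bbig j l = B j.1 j.2 l) :
    ((∀ X : ∀ i : Fin k, Matrix (Fin (pdim i)) (Fin (mdim i)) ℂ,
        (((∑ i, A i * X i * B i) + C) * M * ((∑ i, A i * X i * B i) + C)ᴴ + D).PosSemidef) ↔
      (fromBlocks (D + C * M * Cᴴ) (C * M * Bbigᴴ)
        (Bbig * M * Cᴴ) (Bbig * M * Bbigᴴ)).PosSemidef) ∧
    ((∀ X : ∀ i : Fin k, Matrix (Fin (pdim i)) (Fin (mdim i)) ℂ,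
        (-(((∑ i, A i * X i * B i) + C) * M * ((∑ i, A i * X i * B i) + C)ᴴ + D)).PosSemidef) ↔
      (-(fromBlocks (D + C * M * Cᴴ) (C * M * Bbigᴴ)
          (Bbig * M * Cᴴ) (Bbig * M * Bbigᴴ))).PosSemidef) :=
  stmt15_general A B C D M hD hM hA Bbig hBbig
end

section
/- Let A ∈ ℂ^{m×n}, B ∈ ℂ^{p×q} and C ∈ ℂ^{m×q} be given. Then for X₀ ∈ ℂ^{n×p} the following three conditions are equivalent: (i) A*(C − AXB)(C − AXB)*A ⪰ A*(C − AX₀B)(C − AX₀B)*A for all X ∈ ℂ^{n×p}; (ii) B(C − AXB)*(C − AXB)B* ⪰ B(C − AX₀B)*(C − AX₀B)B* for all X ∈ ℂ^{n×p}; (iii) X₀ satisfies the normal equation A*AX₀BB* = A*CB*. Moreover, a matrix X₀ satisfying these equivalent conditions always exists. -/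
open Matrix
open scoped ComplexOrder

/-! With `G = Aᴴ (C - A X₀ B) Bᴴ`, the residual of the normal equation, the difference of the
sandwiched Gram matrices at `X₀ + D` and at `X₀` is
`(AᴴA D B)(AᴴA D B)ᴴ - (AᴴA D Gᴴ + G (AᴴA D)ᴴ)`. If `G = 0` this is positive semidefinite.
Conversely, `AᴴA` and `Aᴴ` have the same range, so `G = AᴴA Y` for some `Y`, and `D = t Y` turns
the difference into `t² P - 2t GGᴴ`; its trace is a real quadratic in `t` that can only stay
nonnegative if `tr (GGᴴ) = 0`, i.e. `G = 0`. The conditions with `(C - AXB)ᴴ(C - AXB)` are the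
same conditions for `(Bᴴ, Aᴴ, Cᴴ, X₀ᴴ)`. -/

lemma eq_zero_of_forall_sq_mul_sub_nonneg {a b : ℝ} (h : ∀ t : ℝ, 0 ≤ t ^ 2 * a - 2 * t * b) :
    b = 0 := by
  have hpos : 0 < |a| + 1 := by positivity
  have hval : (b / (|a| + 1)) ^ 2 * a - 2 * (b / (|a| + 1)) * b =
      -b ^ 2 * (2 * |a| + 2 - a) / (|a| + 1) ^ 2 := by
    field_simp
    ring
  have hneg : 0 ≤ -b ^ 2 * (2 * |a| + 2 - a) := by
    simpa only [hval, le_div_iff₀ (pow_pos hpos 2), zero_mul] using h (b / (|a| + 1))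
  nlinarith [le_abs_self a, sq_nonneg b]

namespace Matrix

variable {m n p q : Type*} [Fintype m] [Fintype n] [Fintype p] [Fintype q]

theorem exists_conjTranspose_mul_self_mul_eq {k R : Type*} [Field R] [PartialOrder R] [StarRing R]
    [StarOrderedRing R] (A : Matrix m n R) (D : Matrix m k R) :
    ∃ Y : Matrix n k R, Aᴴ * A * Y = Aᴴ * D := by
  have hrange : LinearMap.range (Aᴴ * A).mulVecLin = LinearMap.range Aᴴ.mulVecLin :=
    Submodule.eq_of_le_of_finrank_le
      (by rw [mulVecLin_mul]; exact LinearMap.range_comp_le_range _ _)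
      ((rank_conjTranspose A).trans (rank_conjTranspose_mul_self A).symm).le
  have hcol (j : k) : Aᴴ *ᵥ Dᵀ j ∈ LinearMap.range (Aᴴ * A).mulVecLin :=
    hrange ▸ ⟨Dᵀ j, rfl⟩
  choose y hy using hcol
  refine ⟨(of y)ᵀ, ?_⟩
  ext i j
  simpa only [mulVecLin_apply, mul_apply, mulVec, dotProduct, transpose_apply, of_apply] using
    congrFun (hy j) i

theorem exists_mul_mul_self_conjTranspose_eq {k R : Type*} [Field R] [PartialOrder R] [StarRing R]
    [StarOrderedRing R] (B : Matrix n m R) (D : Matrix k m R) :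
    ∃ Z : Matrix k n R, Z * (B * Bᴴ) = D * Bᴴ := by
  obtain ⟨Y, hY⟩ := exists_conjTranspose_mul_self_mul_eq Bᴴ Dᴴ
  refine ⟨Yᴴ, ?_⟩
  simpa [conjTranspose_mul, Matrix.mul_assoc] using congrArg conjTranspose hY

theorem exists_normal_equation_solution {R : Type*} [Field R] [PartialOrder R] [StarRing R]
    [StarOrderedRing R] (A : Matrix m n R) (B : Matrix p q R) (C : Matrix m q R) :
    ∃ X₀ : Matrix n p R, Aᴴ * A * X₀ * (B * Bᴴ) = Aᴴ * C * Bᴴ := by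
  obtain ⟨Y, hY⟩ := exists_conjTranspose_mul_self_mul_eq A C
  obtain ⟨Z, hZ⟩ := exists_mul_mul_self_conjTranspose_eq B Y
  exact ⟨Z, by rw [Matrix.mul_assoc _ Z, hZ, ← Matrix.mul_assoc, hY]⟩

theorem eq_zero_of_forall_posSemidef_sq_smul_sub {𝕜 : Type*} [RCLike 𝕜] {P : Matrix n n 𝕜}
    {G : Matrix n m 𝕜} (h : ∀ t : ℝ, (t ^ 2 • P - (2 * t) • (G * Gᴴ)).PosSemidef) : G = 0 := by
  have htrace (t : ℝ) : 0 ≤ t ^ 2 * RCLike.re P.trace - 2 * t * RCLike.re (G * Gᴴ).trace := by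
    simpa [trace_sub, trace_smul, RCLike.smul_re] using
      (RCLike.nonneg_iff.mp (h t).trace_nonneg).1
  rw [← trace_mul_conjTranspose_self_eq_zero_iff]
  refine RCLike.ext ?_ ?_
  · simpa using eq_zero_of_forall_sq_mul_sub_nonneg htrace
  · simpa using (RCLike.nonneg_iff.mp (posSemidef_self_mul_conjTranspose G).trace_nonneg).2

lemma conjTranspose_mul_residual_outer_sub {R : Type*} [CommRing R] [StarRing R]
    (A : Matrix m n R) (B : Matrix p q R) (C : Matrix m q R) (X₀ D : Matrix n p R) :
    Aᴴ * ((C - A * (X₀ + D) * B) * (C - A * (X₀ + D) * B)ᴴ) * A -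
        Aᴴ * ((C - A * X₀ * B) * (C - A * X₀ * B)ᴴ) * A =
      Aᴴ * A * D * B * (Aᴴ * A * D * B)ᴴ -
        (Aᴴ * A * D * (Aᴴ * (C - A * X₀ * B) * Bᴴ)ᴴ +
          Aᴴ * (C - A * X₀ * B) * Bᴴ * (Aᴴ * A * D)ᴴ) := by
  simp only [conjTranspose_sub, conjTranspose_add, conjTranspose_mul, conjTranspose_conjTranspose,
    Matrix.mul_add, Matrix.add_mul, Matrix.mul_sub, Matrix.sub_mul, Matrix.mul_assoc]
  abel

theorem forall_posSemidef_residual_outer_sub_iff {𝕜 : Type*} [RCLike 𝕜]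
    (A : Matrix m n 𝕜) (B : Matrix p q 𝕜) (C : Matrix m q 𝕜) (X₀ : Matrix n p 𝕜) :
    (∀ X : Matrix n p 𝕜,
        (Aᴴ * ((C - A * X * B) * (C - A * X * B)ᴴ) * A -
          Aᴴ * ((C - A * X₀ * B) * (C - A * X₀ * B)ᴴ) * A).PosSemidef) ↔
      Aᴴ * A * X₀ * (B * Bᴴ) = Aᴴ * C * Bᴴ := by
  set G := Aᴴ * (C - A * X₀ * B) * Bᴴ with hG
  have hnormal : Aᴴ * A * X₀ * (B * Bᴴ) = Aᴴ * C * Bᴴ ↔ G = 0 := by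
    rw [eq_comm, ← sub_eq_zero, hG]
    simp only [Matrix.mul_sub, Matrix.sub_mul, Matrix.mul_assoc]
  rw [hnormal]
  constructor
  · intro h
    obtain ⟨Y, hY⟩ := exists_conjTranspose_mul_self_mul_eq A ((C - A * X₀ * B) * Bᴴ)
    rw [← Matrix.mul_assoc, ← hG] at hY
    refine eq_zero_of_forall_posSemidef_sq_smul_sub (P := G * B * (G * B)ᴴ) fun t => ?_
    have ht : Aᴴ * A * (t • Y) = t • G := by rw [Matrix.mul_smul, hY]
    convert h (X₀ + t • Y) using 1
    rw [conjTranspose_mul_residual_outer_sub, ← hG, ht]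
    simp only [conjTranspose_smul, star_trivial, Matrix.smul_mul, Matrix.mul_smul, smul_smul,
      two_mul, add_smul, sq]
  · intro hG0 X
    have hdiff := conjTranspose_mul_residual_outer_sub A B C X₀ (X - X₀)
    rw [add_sub_cancel, ← hG, hG0] at hdiff
    rw [hdiff]
    simpa using posSemidef_self_mul_conjTranspose (Aᴴ * A * (X - X₀) * B)

theorem forall_posSemidef_residual_inner_sub_iff {𝕜 : Type*} [RCLike 𝕜]
    (A : Matrix m n 𝕜) (B : Matrix p q 𝕜) (C : Matrix m q 𝕜) (X₀ : Matrix n p 𝕜) :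
    (∀ X : Matrix n p 𝕜,
        (B * ((C - A * X * B)ᴴ * (C - A * X * B)) * Bᴴ -
          B * ((C - A * X₀ * B)ᴴ * (C - A * X₀ * B)) * Bᴴ).PosSemidef) ↔
      Aᴴ * A * X₀ * (B * Bᴴ) = Aᴴ * C * Bᴴ := by
  have hres (X : Matrix n p 𝕜) : Cᴴ - Bᴴ * Xᴴ * Aᴴ = (C - A * X * B)ᴴ := by
    simp only [conjTranspose_sub, conjTranspose_mul, Matrix.mul_assoc]
  have hnormal : Bᴴᴴ * Bᴴ * X₀ᴴ * (Aᴴ * Aᴴᴴ) = Bᴴᴴ * Cᴴ * Aᴴᴴ ↔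
      Aᴴ * A * X₀ * (B * Bᴴ) = Aᴴ * C * Bᴴ := by
    rw [← conjTranspose_inj]
    simp only [conjTranspose_mul, conjTranspose_conjTranspose, Matrix.mul_assoc]
  rw [← hnormal, ← forall_posSemidef_residual_outer_sub_iff,
    (conjTransposeAddEquiv n p 𝕜).surjective.forall]
  simp only [conjTransposeAddEquiv_apply, hres, conjTranspose_conjTranspose]

end Matrix

theorem stmt19 {m n p q : ℕ}
    (A : Matrix (Fin m) (Fin n) ℂ) (B : Matrix (Fin p) (Fin q) ℂ)
    (C : Matrix (Fin m) (Fin q) ℂ) :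
    (∀ X₀ : Matrix (Fin n) (Fin p) ℂ,
      ((∀ X : Matrix (Fin n) (Fin p) ℂ,
          (Aᴴ * ((C - A * X * B) * (C - A * X * B)ᴴ) * A -
            Aᴴ * ((C - A * X₀ * B) * (C - A * X₀ * B)ᴴ) * A).PosSemidef) ↔
        Aᴴ * A * X₀ * (B * Bᴴ) = Aᴴ * C * Bᴴ) ∧
      ((∀ X : Matrix (Fin n) (Fin p) ℂ,
          (B * ((C - A * X * B)ᴴ * (C - A * X * B)) * Bᴴ -
            B * ((C - A * X₀ * B)ᴴ * (C - A * X₀ * B)) * Bᴴ).PosSemidef) ↔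
        Aᴴ * A * X₀ * (B * Bᴴ) = Aᴴ * C * Bᴴ)) ∧
    ∃ X₀ : Matrix (Fin n) (Fin p) ℂ, Aᴴ * A * X₀ * (B * Bᴴ) = Aᴴ * C * Bᴴ := by
  exact ⟨fun X₀ => ⟨forall_posSemidef_residual_outer_sub_iff A B C X₀,
    forall_posSemidef_residual_inner_sub_iff A B C X₀⟩, exists_normal_equation_solution A B C⟩
end
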